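/- Define the pairing [·,·] on pairs of homogeneous polynomials of degree n₁ in X,Y over a field K of characteristic 0 by [X^i Y^{n₁−i}, X^j Y^{n₁−j}] = (−1)^i / binom(n₁,i) if i+j = n₁ and 0 otherwise, extended bilinearly. Then for every g ∈ GL_2(K) and homogeneous polynomials P, Q of degree n₁, one has [P((X,Y)g), Q((X,Y)g)] = (det g)^{n₁} · [P, Q]. -/

import Mathlib

/-!
Both sides are bilinear in `(P, Q)`. For powers of linear forms `ℓ_a = a₀ X + a₁ Y` the binomial
theorem gives `[ℓ_a ^ n, ℓ_b ^ n] = (a₁ b₀ - a₀ b₁) ^ n`, and the substitution by `g` sends `ℓ_a`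
to `ℓ_{g a}`, which multiplies this determinant by `det g`. In characteristic zero the powers
`ℓ_a ^ n` span the forms of degree `n`: a linear functional vanishing on every `(t X + Y) ^ n` is a
polynomial in `t` with infinitely many roots, so it kills every monomial `C(n,i) X^i Y^{n-i}`.
-/

open MvPolynomial

/-- The pairing on binary forms of degree `n` determined by
`[X^i Y^{n−i}, X^j Y^{n−j}] = (−1)^i / C(n,i)` if `i + j = n` and `0` otherwise. -/
noncomputable def pairPoly (K : Type*) [Field K] (n : ℕ)
    (P Q : MvPolynomial (Fin 2) K) : K :=
  ∑ i ∈ Finset.range (n + 1),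
    ((-1 : K) ^ i / (n.choose i : K)) *
      coeff (Finsupp.single (0 : Fin 2) i + Finsupp.single (1 : Fin 2) (n - i)) P *
      coeff (Finsupp.single (0 : Fin 2) (n - i) + Finsupp.single (1 : Fin 2) i) Q

open scoped Matrix

theorem LinearMap.map_monomial_eq_smul {σ R M : Type*} [CommSemiring R] [AddCommMonoid M]
    [Module R M] (χ : MvPolynomial σ R →ₗ[R] M) (d : σ →₀ ℕ) (c : R) :
    χ (monomial d c) = c • χ (monomial d 1) := by
  rw [← map_smul, smul_monomial, smul_eq_mul, mul_one]

section

variable {K : Type*} [Field K]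

noncomputable def linForm (a : Fin 2 → K) : MvPolynomial (Fin 2) K := ∑ i, C (a i) * X i

theorem linForm_pow (a : Fin 2 → K) (n : ℕ) :
    linForm a ^ n = ∑ i ∈ Finset.range (n + 1),
      monomial (Finsupp.single 0 i + Finsupp.single 1 (n - i))
        (a 0 ^ i * a 1 ^ (n - i) * n.choose i) := by
  rw [linForm, Fin.sum_univ_two, add_pow]
  refine Finset.sum_congr rfl fun i _ => ?_
  simp only [mul_pow, ← C_pow, X_pow_eq_monomial, C_mul_monomial, monomial_mul, mul_one,
    ← map_natCast (C : K →+* MvPolynomial (Fin 2) K)]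
  rw [mul_comm, C_mul_monomial]
  ring_nf

theorem coeff_linForm_pow (a : Fin 2 → K) {n i j : ℕ} (h : i + j = n) :
    coeff (Finsupp.single 0 i + Finsupp.single 1 j) (linForm a ^ n) =
      a 0 ^ i * a 1 ^ j * n.choose i := by
  subst h
  rw [linForm_pow, coeff_sum, Finset.sum_eq_single i]
  · rw [Nat.add_sub_cancel_left, coeff_monomial, if_pos rfl]
  · intro k _ hki
    rw [coeff_monomial, if_neg]
    intro hk
    exact hki (by simpa using DFunLike.congr_fun hk 0)
  · intro hi
    exact absurd (Finset.mem_range.mpr (by omega)) hi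

theorem aeval_linForm (g : Matrix (Fin 2) (Fin 2) K) (a : Fin 2 → K) :
    aeval (fun j => linForm fun i => g i j) (linForm a) = linForm (g *ᵥ a) := by
  simp only [linForm, Fin.sum_univ_two, map_add, map_mul, aeval_C, aeval_X, algebraMap_eq,
    Matrix.mulVec, dotProduct]
  ring

theorem pairPoly_add_left (n : ℕ) (P₁ P₂ Q : MvPolynomial (Fin 2) K) :
    pairPoly K n (P₁ + P₂) Q = pairPoly K n P₁ Q + pairPoly K n P₂ Q := by
  simp only [pairPoly, coeff_add, mul_add, add_mul, Finset.sum_add_distrib]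

theorem pairPoly_smul_left (n : ℕ) (c : K) (P Q : MvPolynomial (Fin 2) K) :
    pairPoly K n (c • P) Q = c * pairPoly K n P Q := by
  simp only [pairPoly, coeff_smul, smul_eq_mul, Finset.mul_sum]
  exact Finset.sum_congr rfl fun _ _ => by ring

theorem pairPoly_add_right (n : ℕ) (P Q₁ Q₂ : MvPolynomial (Fin 2) K) :
    pairPoly K n P (Q₁ + Q₂) = pairPoly K n P Q₁ + pairPoly K n P Q₂ := by
  simp only [pairPoly, coeff_add, mul_add, Finset.sum_add_distrib]

theorem pairPoly_smul_right (n : ℕ) (c : K) (P Q : MvPolynomial (Fin 2) K) :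
    pairPoly K n P (c • Q) = c * pairPoly K n P Q := by
  simp only [pairPoly, coeff_smul, smul_eq_mul, Finset.mul_sum]
  exact Finset.sum_congr rfl fun _ _ => by ring

variable (K) in
noncomputable def pairPolyBilin (n : ℕ) :
    MvPolynomial (Fin 2) K →ₗ[K] MvPolynomial (Fin 2) K →ₗ[K] K :=
  LinearMap.mk₂ K (pairPoly K n) (pairPoly_add_left n) (pairPoly_smul_left n)
    (pairPoly_add_right n) (pairPoly_smul_right n)

variable [CharZero K]

theorem pairPoly_linForm_pow (n : ℕ) (a b : Fin 2 → K) :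
    pairPoly K n (linForm a ^ n) (linForm b ^ n) = (a 1 * b 0 - a 0 * b 1) ^ n := by
  rw [sub_eq_neg_add, add_pow, pairPoly]
  refine Finset.sum_congr rfl fun i hi => ?_
  have hin : i ≤ n := Nat.lt_succ_iff.mp (Finset.mem_range.mp hi)
  rw [coeff_linForm_pow a (Nat.add_sub_cancel' hin), coeff_linForm_pow b (Nat.sub_add_cancel hin),
    Nat.choose_symm hin]
  have : (n.choose i : K) ≠ 0 := Nat.cast_ne_zero.mpr (Nat.choose_pos hin).ne'
  field_simp
  ring

theorem LinearMap.map_monomial_eq_zero_of_map_linForm_pow {n : ℕ}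
    (χ : MvPolynomial (Fin 2) K →ₗ[K] K) (h : ∀ a, χ (linForm a ^ n) = 0) {i : ℕ} (hi : i ≤ n) :
    χ (monomial (Finsupp.single 0 i + Finsupp.single 1 (n - i)) 1) = 0 := by
  set p : Polynomial K := ∑ k ∈ Finset.range (n + 1), Polynomial.monomial k
    (n.choose k * χ (monomial (Finsupp.single 0 k + Finsupp.single 1 (n - k)) 1))
  have hp : p = 0 := Polynomial.funext fun t => by
    rw [Polynomial.eval_zero, ← h ![t, 1], linForm_pow, map_sum, Polynomial.eval_finsetSum]
    refine Finset.sum_congr rfl fun k _ => ?_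
    rw [Polynomial.eval_monomial, χ.map_monomial_eq_smul _ (_ * _ * _)]
    simp only [Matrix.cons_val_zero, Matrix.cons_val_one, one_pow, smul_eq_mul]
    ring
  have hcoeff := congrArg (Polynomial.coeff · i) hp
  simp only [p, Polynomial.finsetSum_coeff, Polynomial.coeff_monomial, Finset.sum_ite_eq',
    Finset.mem_range, Polynomial.coeff_zero] at hcoeff
  rw [if_pos (by omega)] at hcoeff
  exact (mul_eq_zero.mp hcoeff).resolve_left (Nat.cast_ne_zero.mpr (Nat.choose_pos hi).ne')

theorem LinearMap.eq_of_eq_on_linForm_pow {n : ℕ} (φ ψ : MvPolynomial (Fin 2) K →ₗ[K] K)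
    (h : ∀ a, φ (linForm a ^ n) = ψ (linForm a ^ n)) {P : MvPolynomial (Fin 2) K}
    (hP : P.IsHomogeneous n) : φ P = ψ P := by
  rw [← sub_eq_zero, ← LinearMap.sub_apply, P.as_sum, map_sum]
  refine Finset.sum_eq_zero fun d hd => ?_
  have hdeg : d 0 + d 1 = n := by
    have := hP (mem_support_iff.mp hd)
    simpa [Finsupp.weight_apply, Finsupp.sum_fintype] using this
  have hd : d = Finsupp.single 0 (d 0) + Finsupp.single 1 (n - d 0) := by
    ext j; fin_cases j <;> simp; omega
  rw [LinearMap.map_monomial_eq_smul, hd,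
    LinearMap.map_monomial_eq_zero_of_map_linForm_pow _ (fun a => by simp [h]) (by omega),
    smul_zero]

theorem LinearMap.eq_of_eq_on_linForm_pow₂ {n : ℕ}
    (B₁ B₂ : MvPolynomial (Fin 2) K →ₗ[K] MvPolynomial (Fin 2) K →ₗ[K] K)
    (h : ∀ a b, B₁ (linForm a ^ n) (linForm b ^ n) = B₂ (linForm a ^ n) (linForm b ^ n))
    {P Q : MvPolynomial (Fin 2) K} (hP : P.IsHomogeneous n) (hQ : Q.IsHomogeneous n) :
    B₁ P Q = B₂ P Q :=
  have hPb : ∀ b, B₁ P (linForm b ^ n) = B₂ P (linForm b ^ n) := fun b =>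
    LinearMap.eq_of_eq_on_linForm_pow (B₁.flip _) (B₂.flip _) (fun a => h a b) hP
  LinearMap.eq_of_eq_on_linForm_pow (B₁ P) (B₂ P) hPb hQ

theorem pairPoly_aeval_linForm_pow (n : ℕ) (g : Matrix (Fin 2) (Fin 2) K) (a b : Fin 2 → K) :
    pairPoly K n (aeval (fun j => linForm fun i => g i j) (linForm a ^ n))
        (aeval (fun j => linForm fun i => g i j) (linForm b ^ n))
      = g.det ^ n * pairPoly K n (linForm a ^ n) (linForm b ^ n) := by
  rw [map_pow, map_pow, aeval_linForm, aeval_linForm, pairPoly_linForm_pow, pairPoly_linForm_pow,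
    ← mul_pow, Matrix.det_fin_two]
  simp only [Matrix.mulVec, dotProduct, Fin.sum_univ_two]
  ring

end

theorem pairPoly_equivariant_general (K : Type*) [Field K] [CharZero K] (n : ℕ)
    (g : Matrix (Fin 2) (Fin 2) K)
    (P Q : MvPolynomial (Fin 2) K)
    (hP : P ∈ homogeneousSubmodule (Fin 2) K n)
    (hQ : Q ∈ homogeneousSubmodule (Fin 2) K n) :
    pairPoly K n
        (aeval (fun j : Fin 2 => ∑ i : Fin 2, C (g i j) * X i) P)
        (aeval (fun j : Fin 2 => ∑ i : Fin 2, C (g i j) * X i) Q)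
      = g.det ^ n * pairPoly K n P Q :=
  let ρ := aeval (R := K) fun j => linForm fun i => g i j
  LinearMap.eq_of_eq_on_linForm_pow₂ ((pairPolyBilin K n).compl₁₂ ρ.toLinearMap ρ.toLinearMap)
    (g.det ^ n • pairPolyBilin K n) (pairPoly_aeval_linForm_pow n g)
    ((mem_homogeneousSubmodule _ _).mp hP) ((mem_homogeneousSubmodule _ _).mp hQ)

/-- For `g ∈ GL₂(K)` and binary forms `P, Q` of degree `n`,
`[P((X,Y)g), Q((X,Y)g)] = (det g)^n · [P, Q]`. -/
theorem pairPoly_equivariant (K : Type*) [Field K] [CharZero K] (n : ℕ)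
    (g : Matrix (Fin 2) (Fin 2) K) (hg : IsUnit g.det)
    (P Q : MvPolynomial (Fin 2) K)
    (hP : P ∈ homogeneousSubmodule (Fin 2) K n)
    (hQ : Q ∈ homogeneousSubmodule (Fin 2) K n) :
    pairPoly K n
        (aeval (fun j : Fin 2 => ∑ i : Fin 2, C (g i j) * X i) P)
        (aeval (fun j : Fin 2 => ∑ i : Fin 2, C (g i j) * X i) Q)
      = g.det ^ n * pairPoly K n P Q :=
  pairPoly_equivariant_general K n g P Q hP hQ
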